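/- arXiv:2211.14520 — 2 statements merged into one kernel-verified Lean document; each statement's English description precedes it below -/
import Mathlib

section
/- Let G be a group acting transitively on a finite set Ω, let H ≤ G act semiregularly on Ω with exactly two orbits H₀ and H₁, and let B be a block for G on Ω. If B ∩ H₀ ≠ ∅ and B ∩ H₁ ≠ ∅ for some block B in a G-invariant partition of Ω, then |B ∩ H₀| = |B ∩ H₁| for every block B in that partition. -/
open Pointwise

/-- Let G act transitively on a finite set Ω, H ≤ G semiregular with exactly two orbits
H₀ and H₁, and B a block for G. If B meets both H₀ and H₁, then every block g•B of the
corresponding G-invariant partition satisfies |g•B ∩ H₀| = |g•B ∩ H₁|. -/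
theorem stmt_7 {G Ω : Type*} [Group G] [MulAction G Ω] [Finite Ω]
    (htrans : MulAction.IsPretransitive G Ω) (H : Subgroup G)
    (hsemi : ∀ h : H, h ≠ 1 → ∀ x : Ω, h • x ≠ x)
    (a₀ a₁ : Ω) (hne : MulAction.orbit H a₀ ≠ MulAction.orbit H a₁)
    (hcover : ∀ x : Ω, x ∈ MulAction.orbit H a₀ ∨ x ∈ MulAction.orbit H a₁)
    (B : Set Ω) (hB : MulAction.IsBlock G B)
    (h0 : (B ∩ MulAction.orbit H a₀).Nonempty)
    (h1 : (B ∩ MulAction.orbit H a₁).Nonempty) :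
    ∀ g : G, Nat.card ↥((g • B) ∩ MulAction.orbit H a₀) =
      Nat.card ↥((g • B) ∩ MulAction.orbit H a₁) := by
  classical
  have hblockeq : ∀ ⦃g₁ g₂ : G⦄, (g₁ • B ∩ g₂ • B).Nonempty → g₁ • B = g₂ • B :=
    MulAction.isBlock_iff_smul_eq_smul_of_nonempty.mp hB
  -- freeness
  have hfree : ∀ (a : Ω) (h h' : H), (h : G) • a = (h' : G) • a → h = h' := by
    intro a h h' he
    by_contra hne'
    have h1' : (h'⁻¹ * h : H) ≠ 1 := by
      intro hh; exact hne' (inv_mul_eq_one.mp hh).symm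
    refine hsemi _ h1' a ?_
    show ((h'⁻¹ * h : H) : G) • a = a
    push_cast
    rw [mul_smul, he, inv_smul_smul]
  -- smul of orbit by element of H
  have horb : ∀ (h : H) (a : Ω), (h : G) • MulAction.orbit H a = MulAction.orbit H a := by
    intro h a
    ext x
    simp only [Set.mem_smul_set]
    constructor
    · rintro ⟨y, ⟨k, rfl⟩, rfl⟩
      refine ⟨h * k, ?_⟩
      show ((h * k : H) : G) • a = (h : G) • ((k : G) • a)
      push_cast; rw [mul_smul]
    · rintro ⟨k, rfl⟩
      refine ⟨((h⁻¹ * k : H) : G) • a, ⟨h⁻¹ * k, rfl⟩, ?_⟩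
      show (h : G) • ((h⁻¹ * k : H) : G) • a = (k : G) • a
      push_cast; rw [mul_smul, smul_inv_smul]
  -- existence of h_i with a_i ∈ h_i • B
  have hexists : ∀ a : Ω, (B ∩ MulAction.orbit H a).Nonempty →
      ∃ h : H, a ∈ (h : G) • B := by
    rintro a ⟨b, hbB, hborb⟩
    obtain ⟨k, hk⟩ := hborb
    have hk' : (k : G) • a = b := hk
    refine ⟨k⁻¹, ?_⟩
    rw [Set.mem_smul_set_iff_inv_smul_mem]
    have : (((k⁻¹ : H) : G))⁻¹ • a = b := by rw [← hk']; push_cast; rw [inv_inv]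
    rwa [this]
  obtain ⟨h₀, hh₀⟩ := hexists a₀ h0
  obtain ⟨h₁, hh₁⟩ := hexists a₁ h1
  -- card of B ∩ orbit a = card of {h : H | a ∈ h • B}
  have keycard : ∀ a : Ω, Nat.card ↥(B ∩ MulAction.orbit H a)
      = Nat.card {h : H // a ∈ (h : G) • B} := by
    intro a
    refine Nat.card_congr (Equiv.symm (Equiv.ofBijective
      (fun h => ⟨(h.1 : G)⁻¹ • a, ?_, ?_⟩) ⟨?_, ?_⟩))
    · exact Set.mem_smul_set_iff_inv_smul_mem.mp h.2
    · refine ⟨h.1⁻¹, ?_⟩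
      show ((h.1⁻¹ : H) : G) • a = (h.1 : G)⁻¹ • a
      push_cast; rfl
    · rintro ⟨h, hh⟩ ⟨h', hh'⟩ he
      have h1'' : (h : G)⁻¹ • a = (h' : G)⁻¹ • a := Subtype.ext_iff.mp he
      have h2'' : ((h⁻¹ : H) : G) • a = ((h'⁻¹ : H) : G) • a := by push_cast; exact h1''
      have := hfree a _ _ h2''
      exact Subtype.ext (Subtype.ext_iff.mp (by simpa [inv_inj] using this))
    · rintro ⟨b, hbB, hborb⟩
      obtain ⟨k, hk⟩ := hborb
      have hk' : (k : G) • a = b := hk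
      have hmem : (((k⁻¹ : H) : G))⁻¹ • a = b := by rw [← hk']; push_cast; rw [inv_inv]
      refine ⟨⟨k⁻¹, ?_⟩, ?_⟩
      · rw [Set.mem_smul_set_iff_inv_smul_mem, hmem]; exact hbB
      · exact Subtype.ext hmem
  -- bijection between the two index sets
  have hmain : Nat.card ↥(B ∩ MulAction.orbit H a₀)
      = Nat.card ↥(B ∩ MulAction.orbit H a₁) := by
    rw [keycard a₀, keycard a₁]
    refine Nat.card_congr ⟨fun h => ⟨h₁ * h₀⁻¹ * h.1, ?_⟩,
      fun h => ⟨h₀ * h₁⁻¹ * h.1, ?_⟩, ?_, ?_⟩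
    · obtain ⟨h, hh⟩ := h
      have heq : (h : G) • B = (h₀ : G) • B := hblockeq ⟨a₀, hh, hh₀⟩
      have : ((h₁ * h₀⁻¹ * h : H) : G) • B = (h₁ : G) • B := by
        push_cast
        rw [mul_smul, mul_smul, heq, inv_smul_smul]
      rw [this]; exact hh₁
    · obtain ⟨h, hh⟩ := h
      have heq : (h : G) • B = (h₁ : G) • B := hblockeq ⟨a₁, hh, hh₁⟩
      have : ((h₀ * h₁⁻¹ * h : H) : G) • B = (h₀ : G) • B := by
        push_cast
        rw [mul_smul, mul_smul, heq, inv_smul_smul]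
      rw [this]; exact hh₀
    · rintro ⟨h, hh⟩; apply Subtype.ext; show h₀ * h₁⁻¹ * (h₁ * h₀⁻¹ * h) = h; group
    · rintro ⟨h, hh⟩; apply Subtype.ext; show h₁ * h₀⁻¹ * (h₀ * h₁⁻¹ * h) = h; group
  -- reduction for arbitrary g
  intro g
  obtain ⟨b, hbB, -⟩ := h0
  have hx : g • b ∈ g • B := Set.smul_mem_smul_set hbB
  have hred : ∃ h : H, g • B = (h : G) • B := by
    rcases hcover (g • b) with hc | hc
    · obtain ⟨k, hk⟩ := hc
      have hk' : (k : G) • a₀ = g • b := hk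
      refine ⟨k * h₀, hblockeq ⟨g • b, hx, ?_⟩⟩
      have : ((k * h₀ : H) : G) • B = (k : G) • ((h₀ : G) • B) := by
        push_cast; rw [mul_smul]
      rw [this, ← hk']
      exact Set.smul_mem_smul_set hh₀
    · obtain ⟨k, hk⟩ := hc
      have hk' : (k : G) • a₁ = g • b := hk
      refine ⟨k * h₁, hblockeq ⟨g • b, hx, ?_⟩⟩
      have : ((k * h₁ : H) : G) • B = (k : G) • ((h₁ : G) • B) := by
        push_cast; rw [mul_smul]
      rw [this, ← hk']
      exact Set.smul_mem_smul_set hh₁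
  obtain ⟨h, hgB⟩ := hred
  have hcardi : ∀ a : Ω, Nat.card ↥((g • B) ∩ MulAction.orbit H a)
      = Nat.card ↥(B ∩ MulAction.orbit H a) := by
    intro a
    have hset : g • B ∩ MulAction.orbit H a
        = (h : G) • (B ∩ MulAction.orbit H a) := by
      rw [hgB, Set.smul_set_inter, horb]
    rw [hset, Nat.card_coe_set_eq, Nat.card_coe_set_eq, Set.ncard_smul_set]
  rw [hcardi a₀, hcardi a₁, hmain]
end

section
/- If a finite group G acts 2-transitively on a finite set Ω, then G has a unique minimal normal subgroup, and this subgroup is either elementary abelian or nonabelian simple. -/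
set_option linter.unusedSectionVars false

namespace BurnsideAux

variable {G Ω : Type*} [Group G] [Finite G] [Finite Ω] [Nontrivial Ω]
  [MulAction G Ω] [FaithfulSMul G Ω]

/-- transitivity of a subgroup on Ω -/
def Tr (Ω : Type*) [MulAction G Ω] (N : Subgroup G) : Prop :=
  ∀ x y : Ω, ∃ n ∈ N, n • x = y

/-- semiregularity of a subgroup on Ω -/
def Srg (Ω : Type*) [MulAction G Ω] (N : Subgroup G) : Prop :=
  ∀ n ∈ N, ∀ x : Ω, n • x = x → n = 1

lemma eq_one_of_fixes {g : G} (h : ∀ x : Ω, g • x = x) : g = 1 :=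
  FaithfulSMul.eq_of_smul_eq_smul (α := Ω) (by simpa using h)

lemma exists_moved {g : G} (hg : g ≠ 1) : ∃ x : Ω, g • x ≠ x := by
  by_contra h
  push_neg at h
  exact hg (eq_one_of_fixes h)

lemma exists_ne_one_mem {N : Subgroup G} (h : N ≠ ⊥) : ∃ n ∈ N, n ≠ 1 := by
  rcases N.bot_or_exists_ne_one with h' | h'
  · exact absurd h' h
  · exact h'

variable (h2 : ∀ a b c d : Ω, a ≠ b → c ≠ d → ∃ g : G, g • a = c ∧ g • b = d)

include h2 in
lemma normal_transitive {N : Subgroup G} (hN : N.Normal) (hne : N ≠ ⊥) : Tr Ω N := by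
  obtain ⟨n₀, hn₀N, hn₀⟩ := exists_ne_one_mem hne
  intro x y
  obtain ⟨z, hz⟩ := exists_moved (Ω := Ω) hn₀
  obtain ⟨w, hw⟩ := exists_ne x
  obtain ⟨g₁, hg₁z, hg₁nz⟩ := h2 z (n₀ • z) x w (Ne.symm hz) (Ne.symm hw)
  have hn₁N : g₁ * n₀ * g₁⁻¹ ∈ N := hN.conj_mem _ hn₀N _
  have hg₁inv : g₁⁻¹ • x = z := by rw [← hg₁z, inv_smul_smul]
  have hn₁x : (g₁ * n₀ * g₁⁻¹) • x = w := by
    rw [mul_smul, mul_smul, hg₁inv, hg₁nz]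
  have hx : (g₁ * n₀ * g₁⁻¹) • x ≠ x := by rw [hn₁x]; exact hw
  by_cases hxy : y = x
  · exact ⟨1, N.one_mem, by rw [one_smul, hxy]⟩
  obtain ⟨g, hg1, hg2⟩ := h2 x ((g₁ * n₀ * g₁⁻¹) • x) x y (Ne.symm hx) (Ne.symm hxy)
  refine ⟨g * (g₁ * n₀ * g₁⁻¹) * g⁻¹, hN.conj_mem _ hn₁N _, ?_⟩
  have hginv : g⁻¹ • x = x := by conv_lhs => rw [← hg1, inv_smul_smul]
  rw [mul_smul, mul_smul, hginv, hg2]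

lemma centralizer_semireg {N : Subgroup G} (hNtr : Tr Ω N) {c : G}
    (hc : ∀ n ∈ N, c * n = n * c) {a : Ω} (ha : c • a = a) : c = 1 := by
  apply eq_one_of_fixes (Ω := Ω)
  intro z
  obtain ⟨n, hn, hnz⟩ := hNtr a z
  calc c • z = c • n • a := by rw [hnz]
    _ = (c * n) • a := by rw [mul_smul]
    _ = (n * c) • a := by rw [hc n hn]
    _ = n • c • a := by rw [mul_smul]
    _ = z := by rw [ha, hnz]

lemma prime_exponent {A : Subgroup G} (hA : A ≠ ⊥)
    (horder : ∀ x ∈ A, ∀ y ∈ A, x ≠ 1 → y ≠ 1 → orderOf x = orderOf y) :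
    ∃ p : ℕ, p.Prime ∧ ∀ a ∈ A, a ^ p = 1 := by
  classical
  haveI : Fintype ↥A := Fintype.ofFinite _
  haveI : Nontrivial ↥A := A.nontrivial_iff_ne_bot.mpr hA
  have hcard : Fintype.card ↥A ≠ 1 := Fintype.one_lt_card.ne'
  set p := (Fintype.card ↥A).minFac with hpdef
  have hp : p.Prime := Nat.minFac_prime hcard
  haveI : Fact p.Prime := ⟨hp⟩
  obtain ⟨a, ha⟩ := exists_prime_orderOf_dvd_card (G := ↥A) p (Nat.minFac_dvd _)
  have haG : orderOf (a : G) = p := by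
    rw [← ha]; exact orderOf_injective A.subtype A.subtype_injective a
  have hane : (a : G) ≠ 1 := by
    intro h
    rw [h, orderOf_one] at haG
    exact hp.one_lt.ne' haG.symm
  refine ⟨p, hp, fun x hx => ?_⟩
  by_cases h1 : x = 1
  · simp [h1]
  have hxo : orderOf x = orderOf (a : G) := horder x hx a a.2 h1 hane
  rw [← haG, ← hxo]
  exact pow_orderOf_eq_one x

include h2 in
lemma conj_trans_of_normal_semireg {N : Subgroup G} (hN : N.Normal) (hsr : Srg Ω N) :
    ∀ x ∈ N, ∀ y ∈ N, x ≠ 1 → y ≠ 1 → ∃ g : G, g * x * g⁻¹ = y := by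
  obtain ⟨α⟩ : Nonempty Ω := inferInstance
  intro x hx y hy hx1 hy1
  have hxa : x • α ≠ α := fun h => hx1 (hsr x hx α h)
  have hya : y • α ≠ α := fun h => hy1 (hsr y hy α h)
  obtain ⟨g, hg1, hg2⟩ := h2 α (x • α) α (y • α) (Ne.symm hxa) (Ne.symm hya)
  refine ⟨g, ?_⟩
  have hmem : g * x * g⁻¹ ∈ N := hN.conj_mem _ hx _
  have hginv : g⁻¹ • α = α := by conv_lhs => rw [← hg1, inv_smul_smul]
  have hfix : (y⁻¹ * (g * x * g⁻¹)) • α = α := by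
    rw [mul_smul, mul_smul, mul_smul, hginv, hg2, inv_smul_smul]
  have := hsr _ (N.mul_mem (N.inv_mem hy) hmem) α hfix
  exact (inv_mul_eq_one.mp this).symm ▸ rfl

include h2 in
lemma semireg_normal_exponent {N : Subgroup G} (hN : N.Normal) (hne : N ≠ ⊥) (hsr : Srg Ω N) :
    ∃ p : ℕ, p.Prime ∧ ∀ n ∈ N, n ^ p = 1 := by
  apply prime_exponent hne
  intro x hx y hy hx1 hy1
  obtain ⟨g, hg⟩ := conj_trans_of_normal_semireg h2 hN hsr x hx y hy hx1 hy1
  have hsc : SemiconjBy g x (g * x * g⁻¹) := by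
    unfold SemiconjBy; group
  rw [hsc.orderOf_eq g, hg]

lemma center_elem {A : Subgroup G} (hA : A ≠ ⊥) {p : ℕ} (hp : p.Prime)
    (hexp : ∀ a ∈ A, a ^ p = 1) :
    ∃ z ∈ A, z ≠ 1 ∧ ∀ a ∈ A, z * a = a * z := by
  haveI : Fact p.Prime := ⟨hp⟩
  have hpg : IsPGroup p ↥A := fun a => ⟨1, by
    rw [pow_one]
    exact Subtype.ext (by simpa using hexp a a.2)⟩
  haveI : Nontrivial ↥A := A.nontrivial_iff_ne_bot.mpr hA
  haveI := hpg.center_nontrivial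
  obtain ⟨z, hz⟩ := exists_ne (1 : Subgroup.center ↥A)
  refine ⟨((z : ↥A) : G), (z : ↥A).2, ?_, ?_⟩
  · intro h
    apply hz
    apply Subtype.ext
    apply Subtype.ext
    simpa using h
  · intro a ha
    have := Subgroup.mem_center_iff.mp z.2 ⟨a, ha⟩
    exact congrArg Subtype.val this |>.symm

include h2 in
lemma inter_ne_bot {M N : Subgroup G} (hM : M.Normal) (hN : N.Normal)
    (hMb : M ≠ ⊥) (hNb : N ≠ ⊥) : M ⊓ N ≠ ⊥ := by
  intro hbot
  have hcomm : ∀ m ∈ M, ∀ n ∈ N, m * n = n * m := by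
    intro m hm n hn
    have h1 : m * n * m⁻¹ * n⁻¹ ∈ N := N.mul_mem (hN.conj_mem n hn m) (N.inv_mem hn)
    have h2' : m * n * m⁻¹ * n⁻¹ ∈ M := by
      have hin : n * m⁻¹ * n⁻¹ ∈ M := hM.conj_mem _ (M.inv_mem hm) n
      have := M.mul_mem hm hin
      convert this using 1
      group
    have hone : m * n * m⁻¹ * n⁻¹ = 1 := by
      have : m * n * m⁻¹ * n⁻¹ ∈ M ⊓ N := ⟨h2', h1⟩
      rwa [hbot, Subgroup.mem_bot] at this
    have h3 : m * n * m⁻¹ = n := by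
      have := mul_eq_one_iff_eq_inv.mp hone
      rw [this, inv_inv]
    calc m * n = (m * n * m⁻¹) * m := by group
      _ = n * m := by rw [h3]
  have trM : Tr Ω M := normal_transitive h2 hM hMb
  have trN : Tr Ω N := normal_transitive h2 hN hNb
  have srM : Srg Ω M := fun m hm x hx =>
    centralizer_semireg trN (fun n hn => hcomm m hm n hn) hx
  obtain ⟨p, hp, hexp⟩ := semireg_normal_exponent h2 hM hMb srM
  obtain ⟨z, hzM, hz1, hzc⟩ := center_elem hMb hp hexp
  obtain ⟨α⟩ : Nonempty Ω := inferInstance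
  obtain ⟨n, hn, hna⟩ := trN α (z • α)
  have hzn : n⁻¹ * z = 1 := by
    apply centralizer_semireg trM (c := n⁻¹ * z) (a := α)
    · intro m hm
      have c1 : n⁻¹ * m = m * n⁻¹ := by
        have := hcomm m hm n hn
        calc n⁻¹ * m = n⁻¹ * (m * n) * n⁻¹ := by group
          _ = n⁻¹ * (n * m) * n⁻¹ := by rw [this]
          _ = m * n⁻¹ := by group
      have c2 : z * m = m * z := hzc m hm
      calc n⁻¹ * z * m = n⁻¹ * (z * m) := by group
        _ = n⁻¹ * (m * z) := by rw [c2]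
        _ = (n⁻¹ * m) * z := by group
        _ = (m * n⁻¹) * z := by rw [c1]
        _ = m * (n⁻¹ * z) := by group
    · rw [mul_smul, ← hna, inv_smul_smul]
  have hzN : z ∈ N := by
    have : z = n := by
      have := inv_mul_eq_one.mp hzn
      rw [← this]
    rw [this]; exact hn
  have : z ∈ M ⊓ N := ⟨hzM, hzN⟩
  rw [hbot, Subgroup.mem_bot] at this
  exact hz1 this

lemma exists_min_card {P : Subgroup G → Prop} (h : ∃ H, P H) :
    ∃ M, P M ∧ ∀ H, P H → Nat.card M ≤ Nat.card H := by
  classical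
  have hA : {n : ℕ | ∃ H, P H ∧ Nat.card H = n}.Nonempty := by
    obtain ⟨H, hH⟩ := h
    exact ⟨Nat.card H, H, hH, rfl⟩
  obtain ⟨H, hH, hcard⟩ := Nat.sInf_mem hA
  exact ⟨H, hH, fun K hK => hcard ▸ Nat.sInf_le ⟨K, hK, rfl⟩⟩

include h2 in
lemma top_ne_bot' : (⊤ : Subgroup G) ≠ ⊥ := by
  obtain ⟨a, b, hab⟩ := exists_pair_ne Ω
  obtain ⟨g, hg1, _⟩ := h2 a b b a hab (Ne.symm hab)
  intro h
  have : g ∈ (⊥ : Subgroup G) := h ▸ Subgroup.mem_top g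
  rw [Subgroup.mem_bot] at this
  rw [this, one_smul] at hg1
  exact hab hg1


def cnj (g : G) (S : Subgroup G) : Subgroup G where
  carrier := {x | g⁻¹ * x * g ∈ S}
  one_mem' := by simpa using S.one_mem
  mul_mem' := by
    intro a b ha hb
    have h : (g⁻¹ * a * g) * (g⁻¹ * b * g) = g⁻¹ * (a * b) * g := by group
    have := S.mul_mem ha hb
    rw [h] at this
    exact this
  inv_mem' := by
    intro a ha
    have h : (g⁻¹ * a * g)⁻¹ = g⁻¹ * a⁻¹ * g := by group
    have := S.inv_mem ha
    rw [h] at this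
    exact this

lemma mem_cnj {g x : G} {S : Subgroup G} : x ∈ cnj g S ↔ g⁻¹ * x * g ∈ S := Iff.rfl

lemma conj_mem_cnj {g s : G} {S : Subgroup G} (hs : s ∈ S) : g * s * g⁻¹ ∈ cnj g S := by
  rw [mem_cnj]
  have h : g⁻¹ * (g * s * g⁻¹) * g = s := by group
  rw [h]
  exact hs

lemma cnj_le {g : G} {S T : Subgroup G} (h : ∀ s ∈ S, g * s * g⁻¹ ∈ T) : cnj g S ≤ T := by
  intro x hx
  rw [mem_cnj] at hx
  have := h _ hx
  have he : g * (g⁻¹ * x * g) * g⁻¹ = x := by group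
  rw [he] at this
  exact this

lemma cnj_cnj {g g' : G} {S : Subgroup G} : cnj g (cnj g' S) = cnj (g * g') S := by
  ext x
  rw [mem_cnj, mem_cnj, mem_cnj]
  constructor <;> intro h <;>
    [ (have he : (g * g')⁻¹ * x * (g * g') = g'⁻¹ * (g⁻¹ * x * g) * g' := by group;
       rw [he]; exact h);
      (have he : g'⁻¹ * (g⁻¹ * x * g) * g' = (g * g')⁻¹ * x * (g * g') := by group;
       rw [he]; exact h)]

lemma cnj_one {S : Subgroup G} : cnj 1 S = S := by
  ext x
  rw [mem_cnj]
  simp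

lemma card_cnj {g : G} {S : Subgroup G} : Nat.card (cnj g S) = Nat.card S := by
  apply Nat.card_congr
  refine ⟨fun t => ⟨g⁻¹ * t * g, t.2⟩, fun s => ⟨g * s * g⁻¹, conj_mem_cnj s.2⟩, ?_, ?_⟩
  · intro t
    apply Subtype.ext
    show g * (g⁻¹ * ↑t * g) * g⁻¹ = ↑t
    group
  · intro s
    apply Subtype.ext
    show g⁻¹ * (g * ↑s * g⁻¹) * g = ↑s
    group

include h2 in
lemma simple_of_nonabelian {M : Subgroup G} (hMn : M.Normal) (hMb : M ≠ ⊥)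
    (hmin : ∀ H : Subgroup G, H.Normal → H ≠ ⊥ → M ≤ H)
    (hnab : ¬ ∀ x y : ↥M, x * y = y * x) : IsSimpleGroup ↥M := by
  classical
  haveI : Nontrivial ↥M := M.nontrivial_iff_ne_bot.mpr hMb
  have trM : Tr Ω M := normal_transitive h2 hMn hMb
  -- M is not semiregular (otherwise it would be abelian)
  have hnonreg : ∃ α : Ω, ∃ u : G, u ∈ M ∧ u ≠ 1 ∧ u • α = α := by
    by_contra hreg
    push_neg at hreg
    have srM : Srg Ω M := by
      intro u hu x hx
      by_contra h1
      exact hreg x u hu h1 hx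
    obtain ⟨p, hp, hexp⟩ := semireg_normal_exponent h2 hMn hMb srM
    obtain ⟨z, hzM, hz1, hzc⟩ := center_elem hMb hp hexp
    apply hnab
    have hcomm : ∀ a ∈ M, ∀ b ∈ M, a * b = b * a := by
      intro a ha b hb
      by_cases ha1 : a = 1
      · rw [ha1, one_mul, mul_one]
      obtain ⟨g, hg⟩ := conj_trans_of_normal_semireg h2 hMn srM z hzM a ha hz1 ha1
      have hbg : g⁻¹ * b * g ∈ M := by
        have := hMn.conj_mem b hb g⁻¹
        simpa using this
      calc a * b = (g * z * g⁻¹) * b := by rw [hg]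
        _ = g * (z * (g⁻¹ * b * g)) * g⁻¹ := by group
        _ = g * ((g⁻¹ * b * g) * z) * g⁻¹ := by rw [hzc _ hbg]
        _ = b * (g * z * g⁻¹) := by group
        _ = b * a := by rw [hg]
    intro x y
    exact Subtype.ext (hcomm x x.2 y y.2)
  refine { toNontrivial := inferInstance, eq_bot_or_eq_top_of_normal := ?_ }
  intro K hK
  by_contra hcon
  push_neg at hcon
  obtain ⟨hKb, hKt⟩ := hcon
  -- push K to a subgroup of G
  set K' : Subgroup G := K.map M.subtype with hK'def
  have hK'leM : K' ≤ M := by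
    rintro x ⟨k, _hk, rfl⟩
    exact k.2
  have hK'norm : ∀ m ∈ M, ∀ x ∈ K', m * x * m⁻¹ ∈ K' := by
    rintro m hm x ⟨k, hk, rfl⟩
    exact ⟨⟨m, hm⟩ * k * ⟨m, hm⟩⁻¹, hK.conj_mem k hk ⟨m, hm⟩, rfl⟩
  have hK'b : K' ≠ ⊥ := by
    obtain ⟨k, hk, hk1⟩ := exists_ne_one_mem hKb
    intro h
    have : (k : G) ∈ K' := ⟨k, hk, rfl⟩
    rw [h, Subgroup.mem_bot] at this
    exact hk1 (Subtype.ext this)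
  have hK'neM : K' ≠ M := by
    intro h
    apply hKt
    rw [Subgroup.eq_top_iff']
    intro m
    have : (m : G) ∈ K' := by rw [h]; exact m.2
    obtain ⟨k, hk, hkeq⟩ := this
    have : k = m := Subtype.ext hkeq
    exact this ▸ hk
  -- the family of nontrivial subgroups normal in M
  set Q : Subgroup G → Prop :=
    fun N => N ≤ M ∧ (∀ m ∈ M, ∀ x ∈ N, m * x * m⁻¹ ∈ N) ∧ N ≠ ⊥ with hQdef
  have hQK' : Q K' := ⟨hK'leM, hK'norm, hK'b⟩
  obtain ⟨S, hQS, hSmin⟩ := exists_min_card ⟨K', hQK'⟩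
  have hcardK'M : Nat.card K' < Nat.card M := by
    have hle := Subgroup.card_le_of_le hK'leM
    exact lt_of_le_of_ne hle fun h =>
      hK'neM (Subgroup.eq_of_le_of_card_ge hK'leM h.ge)
  have hSneM : S ≠ M := by
    intro h
    have := lt_of_le_of_lt (hSmin K' hQK') hcardK'M
    rw [h] at this
    exact lt_irrefl _ this
  have hQcnj : ∀ g : G, Q (cnj g S) := by
    intro g
    refine ⟨?_, ?_, ?_⟩
    · apply cnj_le
      intro s hs
      exact hMn.conj_mem s (hQS.1 hs) g
    · intro m hm x hx
      rw [mem_cnj] at hx ⊢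
      have hmg : g⁻¹ * m * g ∈ M := by
        have := hMn.conj_mem m hm g⁻¹
        simpa using this
      have := hQS.2.1 _ hmg _ hx
      have he : (g⁻¹ * m * g) * (g⁻¹ * x * g) * (g⁻¹ * m * g)⁻¹ =
          g⁻¹ * (m * x * m⁻¹) * g := by group
      rw [he] at this
      exact this
    · intro h
      apply hQS.2.2
      rw [Subgroup.eq_bot_iff_forall] at h ⊢
      intro s hs
      have := h (g * s * g⁻¹) (conj_mem_cnj hs)
      have h1 : s = 1 := by
        have h2' : g * s * g⁻¹ = 1 := this
        have : s = g⁻¹ * (g * s * g⁻¹) * g := by group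
        rw [this, h2']
        group
      exact h1
  -- two distinct members of the family intersect trivially and commute
  have hpair : ∀ T T' : Subgroup G, Q T → Q T' →
      Nat.card T = Nat.card S → Nat.card T' = Nat.card S → T ≠ T' →
      (T ⊓ T' = ⊥ ∧ ∀ a ∈ T, ∀ b ∈ T', a * b = b * a) := by
    intro T T' hQT hQT' hcT hcT' hne
    have hbot : T ⊓ T' = ⊥ := by
      by_contra hb
      have hQint : Q (T ⊓ T') :=
        ⟨le_trans inf_le_left hQT.1,
         fun m hm x hx => ⟨hQT.2.1 m hm x hx.1, hQT'.2.1 m hm x hx.2⟩, hb⟩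
      have h1 : Nat.card T ≤ Nat.card ↥(T ⊓ T') := hcT ▸ hSmin _ hQint
      have h2' : T ⊓ T' = T := Subgroup.eq_of_le_of_card_ge inf_le_left h1
      have h3 : T ≤ T' := h2' ▸ inf_le_right
      exact hne (Subgroup.eq_of_le_of_card_ge h3 (hcT' ▸ hcT.ge))
    refine ⟨hbot, ?_⟩
    intro a ha b hb
    have h1 : a * b * a⁻¹ * b⁻¹ ∈ T' :=
      T'.mul_mem (hQT'.2.1 a (hQT.1 ha) b hb) (T'.inv_mem hb)
    have h2' : a * b * a⁻¹ * b⁻¹ ∈ T := by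
      have hin : b * a⁻¹ * b⁻¹ ∈ T := hQT.2.1 b (hQT'.1 hb) a⁻¹ (T.inv_mem ha)
      have := T.mul_mem ha hin
      convert this using 1
      group
    have hone : a * b * a⁻¹ * b⁻¹ = 1 := by
      have : a * b * a⁻¹ * b⁻¹ ∈ T ⊓ T' := ⟨h2', h1⟩
      rwa [hbot, Subgroup.mem_bot] at this
    have h3 : a * b * a⁻¹ = b := by
      have := mul_eq_one_iff_eq_inv.mp hone
      rw [this, inv_inv]
    calc a * b = (a * b * a⁻¹) * a := by group
      _ = b * a := by rw [h3]
  have hexg₀ : ∃ g₀ : G, cnj g₀ S ≠ S := by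
    by_contra hall
    push_neg at hall
    have hSnorm : S.Normal := by
      constructor
      intro s hs g
      have := conj_mem_cnj (g := g) hs
      rwa [hall g] at this
    exact hSneM (le_antisymm hQS.1 (hmin S hSnorm hQS.2.2))
  -- killing tool: a member of the family fixing a point pointwise is impossible
  have subkill : ∀ T : Subgroup G, Q T → ∀ α : Ω, (∀ v ∈ T, v • α = α) → False := by
    rintro T ⟨hTle, hTnorm, hTb⟩ α hfix
    obtain ⟨v, hv, hv1⟩ := exists_ne_one_mem hTb
    apply hv1
    apply eq_one_of_fixes (Ω := Ω)
    intro x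
    obtain ⟨m, hm, hmx⟩ := trM α x
    have hvm : m⁻¹ * v * m ∈ T := by
      have := hTnorm m⁻¹ (M.inv_mem hm) v hv
      simpa using this
    calc v • x = v • m • α := by rw [hmx]
      _ = m • (m⁻¹ * v * m) • α := by
          rw [← mul_smul, ← mul_smul]
          congr 1
          group
      _ = m • α := by rw [hfix _ hvm]
      _ = x := hmx
  by_cases hStr : Tr Ω S
  · -- Branch I : S acts transitively
    obtain ⟨g₀, hg₀⟩ := hexg₀
    set S' : Subgroup G := cnj g₀ S with hS'def
    have hcardS' : Nat.card S' = Nat.card S := card_cnj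
    have hSS' := hpair S S' hQS (hQcnj g₀) rfl hcardS' (Ne.symm hg₀)
    have trS' : Tr Ω S' := by
      intro x y
      obtain ⟨s, hs, hsx⟩ := hStr (g₀⁻¹ • x) (g₀⁻¹ • y)
      refine ⟨g₀ * s * g₀⁻¹, conj_mem_cnj hs, ?_⟩
      rw [mul_smul, mul_smul, hsx, smul_inv_smul]
    have srS : Srg Ω S := fun s hs x hx =>
      centralizer_semireg trS' (fun b hb => hSS'.2 s hs b hb) hx
    have srS' : Srg Ω S' := fun t ht x hx =>
      centralizer_semireg hStr (fun s hs => (hSS'.2 s hs t ht).symm) hx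
    obtain ⟨α⟩ : Nonempty Ω := inferInstance
    have hCS' : ∀ c : G, (∀ s ∈ S, c * s = s * c) → c ∈ S' := by
      intro c hc
      obtain ⟨t, ht, hta⟩ := trS' α (c • α)
      have h1 : t⁻¹ * c = 1 := by
        apply centralizer_semireg hStr (c := t⁻¹ * c) (a := α)
        · intro s hs
          have c1 : t⁻¹ * s = s * t⁻¹ := by
            have hst := hSS'.2 s hs t ht
            calc t⁻¹ * s = t⁻¹ * (s * t) * t⁻¹ := by group
              _ = t⁻¹ * (t * s) * t⁻¹ := by rw [hst]
              _ = s * t⁻¹ := by group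
          calc t⁻¹ * c * s = t⁻¹ * (c * s) := by group
            _ = t⁻¹ * (s * c) := by rw [hc s hs]
            _ = (t⁻¹ * s) * c := by group
            _ = (s * t⁻¹) * c := by rw [c1]
            _ = s * (t⁻¹ * c) := by group
        · rw [mul_smul, ← hta, inv_smul_smul]
      have hct : t = c := inv_mul_eq_one.mp h1
      rw [← hct]; exact ht
    have hCS : ∀ c : G, (∀ b ∈ S', c * b = b * c) → c ∈ S := by
      intro c hc
      obtain ⟨s, hs, hsa⟩ := hStr α (c • α)
      have h1 : s⁻¹ * c = 1 := by
        apply centralizer_semireg trS' (c := s⁻¹ * c) (a := α)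
        · intro b hb
          have c1 : s⁻¹ * b = b * s⁻¹ := by
            have hsb := hSS'.2 s hs b hb
            calc s⁻¹ * b = s⁻¹ * (b * s) * s⁻¹ := by group
              _ = s⁻¹ * (s * b) * s⁻¹ := by rw [← hsb]
              _ = b * s⁻¹ := by group
          calc s⁻¹ * c * b = s⁻¹ * (c * b) := by group
            _ = s⁻¹ * (b * c) := by rw [hc b hb]
            _ = (s⁻¹ * b) * c := by group
            _ = (b * s⁻¹) * c := by rw [c1]
            _ = b * (s⁻¹ * c) := by group
        · rw [mul_smul, ← hsa, inv_smul_smul]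
      have hcs : s = c := inv_mul_eq_one.mp h1
      rw [← hcs]; exact hs
    have hconjS : ∀ h : G, cnj h S = S ∨ cnj h S = S' := by
      intro h
      by_cases he : cnj h S = S
      · exact Or.inl he
      right
      have hp2 := hpair (cnj h S) S (hQcnj h) hQS card_cnj rfl he
      have hle : cnj h S ≤ S' := fun a ha => hCS' a (fun s hs => hp2.2 a ha s hs)
      exact Subgroup.eq_of_le_of_card_ge hle (by rw [hcardS', card_cnj])
    have htransfer : ∀ g : G, g • α = α → ∀ t ∈ S', ∃ t' ∈ S',
        t' • α = g • (t • α) ∧ orderOf t' = orderOf t := by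
      intro g hga t ht
      have hginv : g⁻¹ • α = α := by conv_lhs => rw [← hga, inv_smul_smul]
      have hcnjS' : cnj g S' = S ∨ cnj g S' = S' := by
        rw [hS'def, cnj_cnj]; exact hconjS (g * g₀)
      have hmemw : g * t * g⁻¹ ∈ cnj g S' := conj_mem_cnj ht
      have hordw : orderOf (g * t * g⁻¹) = orderOf t := by
        have hsc : SemiconjBy g t (g * t * g⁻¹) := by unfold SemiconjBy; group
        exact (hsc.orderOf_eq g).symm
      have hsmulw : (g * t * g⁻¹) • α = g • (t • α) := by
        rw [mul_smul, mul_smul, hginv]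
      rcases hcnjS' with hcase | hcase
      · -- the conjugate lands in S
        have hwS : g * t * g⁻¹ ∈ S := hcase ▸ hmemw
        set w : G := g * t * g⁻¹ with hwdef
        obtain ⟨t', ht', hta⟩ := trS' α (w • α)
        have hpow : ∀ k : ℕ, t' ^ k • α = w ^ k • α := by
          intro k
          induction k with
          | zero => simp
          | succ k ih =>
            have hcw : w ^ k * t' = t' * w ^ k := hSS'.2 _ (S.pow_mem hwS k) t' ht'
            calc t' ^ (k+1) • α = (t' * t' ^ k) • α := by rw [← pow_succ']
              _ = t' • (t' ^ k • α) := by rw [mul_smul]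
              _ = t' • (w ^ k • α) := by rw [ih]
              _ = (t' * w ^ k) • α := by rw [mul_smul]
              _ = (w ^ k * t') • α := by rw [← hcw]
              _ = w ^ k • (t' • α) := by rw [mul_smul]
              _ = w ^ k • (w • α) := by rw [hta]
              _ = (w ^ k * w) • α := by rw [← mul_smul]
              _ = w ^ (k+1) • α := by rw [← pow_succ]
        have hord : orderOf t' = orderOf w := by
          rw [orderOf_eq_orderOf_iff]
          intro n
          constructor
          · intro hn
            apply srS _ (S.pow_mem hwS n) α
            rw [← hpow n, hn, one_smul]
          · intro hn
            apply srS' _ (S'.pow_mem ht' n) α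
            rw [hpow n, hn, one_smul]
        exact ⟨t', ht', by rw [hta, hwdef, hsmulw], by rw [hord, hwdef, hordw]⟩
      · exact ⟨g * t * g⁻¹, hcase ▸ hmemw, hsmulw, hordw⟩
    have hS'b : S' ≠ ⊥ := (hQcnj g₀).2.2
    have hsameord : ∀ x ∈ S', ∀ y ∈ S', x ≠ 1 → y ≠ 1 → orderOf x = orderOf y := by
      intro x hx y hy hx1 hy1
      have hxa : x • α ≠ α := fun h => hx1 (srS' x hx α h)
      have hya : y • α ≠ α := fun h => hy1 (srS' y hy α h)
      obtain ⟨g, hg1, hg2⟩ := h2 α (x • α) α (y • α) (Ne.symm hxa) (Ne.symm hya)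
      obtain ⟨t', ht', hta, hord⟩ := htransfer g hg1 x hx
      have h1 : y⁻¹ * t' = 1 := by
        apply srS' _ (S'.mul_mem (S'.inv_mem hy) ht') α
        rw [mul_smul, hta, hg2, inv_smul_smul]
      have hty : y = t' := inv_mul_eq_one.mp h1
      rw [← hord, ← hty]
    obtain ⟨p, hp, hexp⟩ := prime_exponent hS'b hsameord
    obtain ⟨z, hzS', hz1, hzc⟩ := center_elem hS'b hp hexp
    have hzS : z ∈ S := hCS z (fun b hb => hzc b hb)
    have hzmem : z ∈ S ⊓ S' := ⟨hzS, hzS'⟩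
    rw [hSS'.1, Subgroup.mem_bot] at hzmem
    exact hz1 hzmem
  · -- Branch II : S is not transitive
    unfold Tr at hStr
    push_neg at hStr
    obtain ⟨x₀, y₀, hxy⟩ := hStr
    -- every element of M decomposes as s * c with s ∈ S and c ∈ M centralizing S
    have hdecomp : ∀ u ∈ M, ∃ s ∈ S, ∃ c ∈ M, (∀ t ∈ S, c * t = t * c) ∧ u = s * c := by
      have hPle : M ≤
          { carrier := {x : G | ∃ s ∈ S, ∃ c ∈ M, (∀ t ∈ S, c * t = t * c) ∧ x = s * c}
            one_mem' := ⟨1, S.one_mem, 1, M.one_mem, fun t _ => by group, by group⟩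
            mul_mem' := by
              rintro a b ⟨s, hs, ca, hca, hcaS, rfl⟩ ⟨s', hs', cb, hcb, hcbS, rfl⟩
              refine ⟨s * s', S.mul_mem hs hs', ca * cb, M.mul_mem hca hcb, ?_, ?_⟩
              · intro t ht
                calc ca * cb * t = ca * (cb * t) := by group
                  _ = ca * (t * cb) := by rw [hcbS t ht]
                  _ = (ca * t) * cb := by group
                  _ = (t * ca) * cb := by rw [hcaS t ht]
                  _ = t * (ca * cb) := by group
              · calc (s * ca) * (s' * cb) = s * (ca * s') * cb := by group
                  _ = s * (s' * ca) * cb := by rw [hcaS s' hs']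
                  _ = (s * s') * (ca * cb) := by group
            inv_mem' := by
              rintro a ⟨s, hs, ca, hca, hcaS, rfl⟩
              refine ⟨s⁻¹, S.inv_mem hs, ca⁻¹, M.inv_mem hca, ?_, ?_⟩
              · intro t ht
                have h1 := hcaS t ht
                calc ca⁻¹ * t = ca⁻¹ * (t * ca) * ca⁻¹ := by group
                  _ = ca⁻¹ * (ca * t) * ca⁻¹ := by rw [← h1]
                  _ = t * ca⁻¹ := by group
              · have hsc : ca * s = s * ca := hcaS s hs
                have hinv : ca⁻¹ * s⁻¹ = s⁻¹ * ca⁻¹ := by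
                  calc ca⁻¹ * s⁻¹ = ca⁻¹ * s⁻¹ * (ca * s) * s⁻¹ * ca⁻¹ := by group
                    _ = ca⁻¹ * s⁻¹ * (s * ca) * s⁻¹ * ca⁻¹ := by rw [hsc]
                    _ = s⁻¹ * ca⁻¹ := by group
                rw [mul_inv_rev, hinv] } := by
        have hncb : Subgroup.normalClosure (S : Set G) ≠ ⊥ := by
          intro h
          apply hQS.2.2
          rw [Subgroup.eq_bot_iff_forall] at h ⊢
          intro x hx
          exact h x (Subgroup.subset_normalClosure hx)
        refine le_trans (hmin _ Subgroup.normalClosure_normal hncb) ?_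
        refine (Subgroup.closure_le _).mpr ?_
        intro x hx
        obtain ⟨a, ha, hconj⟩ := Group.mem_conjugatesOfSet_iff.mp hx
        obtain ⟨g, hg⟩ := isConj_iff.mp hconj
        have hxcnj : x ∈ cnj g S := by
          rw [← hg]
          exact conj_mem_cnj ha
        by_cases hc : cnj g S = S
        · rw [hc] at hxcnj
          exact ⟨x, hxcnj, 1, M.one_mem, fun t _ => by group, by group⟩
        · have hp2 := hpair (cnj g S) S (hQcnj g) hQS card_cnj rfl hc
          exact ⟨1, S.one_mem, x, (hQcnj g).1 hxcnj,
            fun t ht => hp2.2 x hxcnj t ht, by group⟩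
      intro u hu
      exact hPle hu
    by_cases hFrob : ∀ v ∈ M, ∀ x y : Ω, x ≠ y → v • x = x → v • y = y → v = 1
    · -- IIa : M acts like a Frobenius group; impossible since S and a distinct
      -- conjugate of it centralize each other
      obtain ⟨α, u, huM, hu1, huα⟩ := hnonreg
      obtain ⟨s, hs, cu, hcu, hcuS, hu'⟩ := hdecomp u huM
      by_cases hs1 : s = 1
      · -- u centralizes S, hence S fixes α pointwise
        have hucomm : ∀ t ∈ S, u * t = t * u := by
          intro t ht
          rw [hu', hs1, one_mul]
          exact hcuS t ht
        have hfixS : ∀ v ∈ S, v • α = α := by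
          intro v hv
          by_contra hne
          have hfix : u • (v • α) = v • α := by
            rw [← mul_smul, hucomm v hv, mul_smul, huα]
          exact hu1 (hFrob u huM α (v • α) (Ne.symm hne) huα hfix)
        exact subkill S hQS α hfixS
      · -- s is a nontrivial element of S fixing α
        have hsu : u * s = s * u := by
          rw [hu']
          calc (s * cu) * s = s * (cu * s) := by group
            _ = s * (s * cu) := by rw [hcuS s hs]
            _ = s * (s * cu) := rfl
        have hsα : s • α = α := by
          by_contra hne
          have hfix : u • (s • α) = s • α := by
            rw [← mul_smul, hsu, mul_smul, huα]
          exact hu1 (hFrob u huM α (s • α) (Ne.symm hne) huα hfix)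
        obtain ⟨g₀, hg₀⟩ := hexg₀
        have hp2 := hpair (cnj g₀ S) S (hQcnj g₀) hQS card_cnj rfl hg₀
        have hfixT : ∀ w ∈ cnj g₀ S, w • α = α := by
          intro w hw
          by_contra hne
          have hws : s * w = w * s := (hp2.2 w hw s hs).symm
          have hfix : s • (w • α) = w • α := by
            rw [← mul_smul, hws, mul_smul, hsα]
          exact hs1 (hFrob s (hQS.1 hs) α (w • α) (Ne.symm hne) hsα hfix)
        exact subkill (cnj g₀ S) (hQcnj g₀) α hfixT
    · -- IIb : some nontrivial element of M fixes two points; use the line geometry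
      push_neg at hFrob
      obtain ⟨u, huM, xh, yh, hxyne, hux, huy, hu1⟩ := hFrob
      -- S-orbits
      set SOrb : Ω → Set Ω := fun x => {y | ∃ s ∈ S, s • x = y} with hSOrbdef
      have horb_mem : ∀ x y, y ∈ SOrb x → ∀ w, w ∈ SOrb y → w ∈ SOrb x := by
        rintro x y ⟨s, hs, rfl⟩ w ⟨s', hs', rfl⟩
        exact ⟨s' * s, S.mul_mem hs' hs, by rw [mul_smul]⟩
      have horb_symm : ∀ x y, y ∈ SOrb x → x ∈ SOrb y := by
        rintro x y ⟨s, hs, rfl⟩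
        exact ⟨s⁻¹, S.inv_mem hs, by rw [inv_smul_smul]⟩
      -- blocks
      set IsBlk : Set Ω → Prop :=
        fun B => ∀ m ∈ M, (∀ b ∈ B, m • b ∈ B) ∨ (∀ b ∈ B, m • b ∉ B) with hBlkdef
      have hconjsmul : ∀ (m s : G) (x : Ω), m • s • x = (m * s * m⁻¹) • (m • x) := by
        intro m s x
        rw [← mul_smul, ← mul_smul]
        congr 1
        group
      have horbblk : ∀ x, IsBlk (SOrb x) := by
        intro x m hm
        by_cases hc : m • x ∈ SOrb x
        · left
          rintro b ⟨s, hs, rfl⟩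
          have h1 : m * s * m⁻¹ ∈ S := hQS.2.1 m hm s hs
          rw [hconjsmul]
          exact horb_mem x (m • x) hc _ ⟨_, h1, rfl⟩
        · right
          rintro b ⟨s, hs, rfl⟩ hmem
          apply hc
          rw [hconjsmul] at hmem
          have h1 : m * s * m⁻¹ ∈ S := hQS.2.1 m hm s hs
          have h3 : m • x ∈ SOrb ((m * s * m⁻¹) • (m • x)) := horb_symm _ _ ⟨_, h1, rfl⟩
          exact horb_mem x _ hmem _ h3
      have hblk_translate : ∀ g : G, ∀ B, IsBlk B → IsBlk ((fun ω => g • ω) '' B) := by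
        intro g B hB m hm
        have hmg : g⁻¹ * m * g ∈ M := by
          have := hMn.conj_mem m hm g⁻¹
          simpa using this
        rcases hB _ hmg with hca | hcb
        · left
          rintro b ⟨b₀, hb₀, rfl⟩
          refine ⟨(g⁻¹ * m * g) • b₀, hca b₀ hb₀, ?_⟩
          simp only [← mul_smul]
          congr 1
          group
        · right
          rintro b ⟨b₀, hb₀, rfl⟩ hmem
          obtain ⟨b₁, hb₁, hb₁eq⟩ := hmem
          have hb₁eq' : g • b₁ = m • g • b₀ := by simpa using hb₁eq
          have hkey : (g⁻¹ * m * g) • b₀ = b₁ := by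
            apply MulAction.injective g
            show g • ((g⁻¹ * m * g) • b₀) = g • b₁
            rw [hb₁eq']
            simp only [← mul_smul]
            congr 1
            group
          exact hcb b₀ hb₀ (hkey ▸ hb₁)
      -- a block of size in [2, |Ω|)
      obtain ⟨s₁, hs₁S, hs₁⟩ := exists_ne_one_mem hQS.2.2
      obtain ⟨z, hz⟩ := exists_moved (Ω := Ω) hs₁
      obtain ⟨m₀, hm₀, hm₀x⟩ := trM x₀ z
      have hB₀out : m₀ • y₀ ∉ SOrb z := by
        rintro ⟨s, hs, hseq⟩
        apply hxy (m₀⁻¹ * s * m₀)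
          (by have := hQS.2.1 m₀⁻¹ (M.inv_mem hm₀) s hs; simpa using this)
        have hkey : m₀ • (m₀⁻¹ * s * m₀) • x₀ = m₀ • y₀ := by
          calc m₀ • (m₀⁻¹ * s * m₀) • x₀ = (m₀ * (m₀⁻¹ * s * m₀)) • x₀ := by rw [← mul_smul]
            _ = (s * m₀) • x₀ := by congr 1; group
            _ = s • (m₀ • x₀) := by rw [mul_smul]
            _ = m₀ • y₀ := by rw [hm₀x, hseq]
        exact MulAction.injective m₀ hkey
      have hB₀card : 1 < (SOrb z).ncard := by
        rw [Set.one_lt_ncard (Set.toFinite _)]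
        exact ⟨s₁ • z, ⟨s₁, hs₁S, rfl⟩, z, ⟨1, S.one_mem, one_smul _ _⟩, hz⟩
      have hB₀univ : SOrb z ≠ Set.univ := by
        intro h
        exact hB₀out (h ▸ Set.mem_univ _)
      -- minimal size of a proper block
      set N : Set ℕ := {k | ∃ B : Set Ω, IsBlk B ∧ B ≠ Set.univ ∧ 2 ≤ B.ncard ∧ B.ncard = k}
        with hNdef
      have hNne : N.Nonempty := ⟨(SOrb z).ncard, SOrb z, horbblk z, hB₀univ, hB₀card, rfl⟩
      obtain ⟨B₁, hB₁blk, hB₁univ, hB₁2, hB₁c⟩ := Nat.sInf_mem hNne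
      set Line : Set Ω → Prop :=
        fun L => IsBlk L ∧ L ≠ Set.univ ∧ L.ncard = sInf N with hLinedef
      have hlineThru : ∀ x y : Ω, x ≠ y → ∃ L, Line L ∧ x ∈ L ∧ y ∈ L := by
        intro x y hxyne'
        have h2pts : ∃ a ∈ B₁, ∃ b ∈ B₁, a ≠ b := by
          rw [← Set.one_lt_ncard (Set.toFinite _)]
          omega
        obtain ⟨a, ha, b, hb, hab⟩ := h2pts
        obtain ⟨g, hg1, hg2⟩ := h2 a b x y hab hxyne'
        refine ⟨(fun ω => g • ω) '' B₁, ⟨hblk_translate g B₁ hB₁blk, ?_, ?_⟩,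
          ⟨a, ha, hg1⟩, ⟨b, hb, hg2⟩⟩
        · obtain ⟨w, hw⟩ := (Set.ne_univ_iff_exists_notMem _).mp hB₁univ
          rw [Set.ne_univ_iff_exists_notMem]
          refine ⟨g • w, ?_⟩
          rintro ⟨w', hw', hw'eq⟩
          exact hw ((MulAction.injective g hw'eq) ▸ hw')
        · rw [Set.ncard_image_of_injective _ (MulAction.injective g), hB₁c]
      have hlineU : ∀ L L' : Set Ω, Line L → Line L' → ∀ a b : Ω, a ≠ b →
          a ∈ L → b ∈ L → a ∈ L' → b ∈ L' → L = L' := by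
        intro L L' hL hL' a b hab haL hbL haL' hbL'
        have hint : IsBlk (L ∩ L') := by
          intro m hm
          by_cases hex : ∃ p ∈ L ∩ L', m • p ∈ L ∩ L'
          · obtain ⟨p, hp, hmp⟩ := hex
            have c1 : ∀ q ∈ L, m • q ∈ L := by
              rcases hL.1 m hm with h | h
              · exact h
              · exact absurd hmp.1 (h p hp.1)
            have c2 : ∀ q ∈ L', m • q ∈ L' := by
              rcases hL'.1 m hm with h | h
              · exact h
              · exact absurd hmp.2 (h p hp.2)
            exact Or.inl fun q hq => ⟨c1 q hq.1, c2 q hq.2⟩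
          · push_neg at hex
            exact Or.inr hex
        have hcard2 : 2 ≤ (L ∩ L').ncard := by
          have h1 : 1 < (L ∩ L').ncard := by
            rw [Set.one_lt_ncard (Set.toFinite _)]
            exact ⟨a, ⟨haL, haL'⟩, b, ⟨hbL, hbL'⟩, hab⟩
          omega
        have hintuniv : L ∩ L' ≠ Set.univ := by
          intro h
          apply hL.2.1
          apply Set.eq_univ_of_univ_subset
          rw [← h]
          exact Set.inter_subset_left
        have hcle : sInf N ≤ (L ∩ L').ncard := Nat.sInf_le ⟨L ∩ L', hint, hintuniv, hcard2, rfl⟩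
        have hLeq : L ∩ L' = L :=
          Set.eq_of_subset_of_ncard_le Set.inter_subset_left
            (by rw [hL.2.2]; exact hcle) (Set.toFinite _)
        have hL'eq : L ∩ L' = L' :=
          Set.eq_of_subset_of_ncard_le Set.inter_subset_right
            (by rw [hL'.2.2]; exact hcle) (Set.toFinite _)
        rw [← hLeq, hL'eq]
      have hstab : ∀ w ∈ M, ∀ L : Set Ω, IsBlk L → ∀ x ∈ L, w • x = x →
          ∀ q ∈ L, w • q ∈ L := by
        intro w hw L hL x hx hwx q hq
        rcases hL w hw with h | h
        · exact h q hq
        · exfalso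
          apply h x hx
          rw [hwx]
          exact hx
      have hfixout : ∀ w ∈ M, w ≠ 1 → ∀ a b : Ω, a ≠ b → w • a = a → w • b = b →
          ∀ L : Set Ω, Line L → a ∈ L → b ∈ L → ∀ z' ∉ L, w • z' = z' := by
        intro w hw hw1 a b hab hwa hwb L hL haL hbL z' hzL
        have hza : a ≠ z' := fun h => hzL (h ▸ haL)
        have hzb : b ≠ z' := fun h => hzL (h ▸ hbL)
        obtain ⟨L₁, hL₁, haL₁, hzL₁⟩ := hlineThru a z' hza
        obtain ⟨L₂, hL₂, hbL₂, hzL₂⟩ := hlineThru b z' hzb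
        have hL₁₂ : L₁ ≠ L₂ := by
          intro h
          have hbL₁ : b ∈ L₁ := h ▸ hbL₂
          have hLL : L₁ = L := hlineU L₁ L hL₁ hL a b hab haL₁ hbL₁ haL hbL
          exact hzL (hLL ▸ hzL₁)
        have hwz₁ : w • z' ∈ L₁ := hstab w hw L₁ hL₁.1 a haL₁ hwa z' hzL₁
        have hwz₂ : w • z' ∈ L₂ := hstab w hw L₂ hL₂.1 b hbL₂ hwb z' hzL₂
        by_contra hwz
        exact hL₁₂ (hlineU L₁ L₂ hL₁ hL₂ z' (w • z') (Ne.symm hwz) hzL₁ hwz₁ hzL₂ hwz₂)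
      obtain ⟨L₀, hL₀, hxL₀, hyL₀⟩ := hlineThru xh yh hxyne
      have hfix₀ : ∀ z' ∉ L₀, u • z' = z' :=
        hfixout u huM hu1 xh yh hxyne hux huy L₀ hL₀ hxL₀ hyL₀
      obtain ⟨w', hw'⟩ := (Set.ne_univ_iff_exists_notMem _).mp hL₀.2.1
      obtain ⟨m₁, hm₁, hm₁x⟩ := trM xh w'
      have hcase2 : ∀ b ∈ L₀, m₁ • b ∉ L₀ := by
        rcases hL₀.1 m₁ hm₁ with h | h
        · exact absurd (hm₁x ▸ h xh hxL₀) hw'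
        · exact h
      have haout : m₁ • xh ∉ L₀ := hcase2 xh hxL₀
      have hbout : m₁ • yh ∉ L₀ := hcase2 yh hyL₀
      have habne : m₁ • xh ≠ m₁ • yh := fun h => hxyne (MulAction.injective m₁ h)
      have hua' : u • (m₁ • xh) = m₁ • xh := hfix₀ _ haout
      have hub' : u • (m₁ • yh) = m₁ • yh := hfix₀ _ hbout
      obtain ⟨L₃, hL₃, haL₃, hbL₃⟩ := hlineThru (m₁ • xh) (m₁ • yh) habne
      have hL₃₀ : L₀ ≠ L₃ := fun h => haout (h ▸ haL₃)
      have hfix₃ : ∀ z' ∉ L₃, u • z' = z' :=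
        hfixout u huM hu1 (m₁ • xh) (m₁ • yh) habne hua' hub' L₃ hL₃ haL₃ hbL₃
      apply hu1
      apply eq_one_of_fixes (Ω := Ω)
      intro q
      by_cases hqL₀ : q ∈ L₀
      · by_cases hqL₃ : q ∈ L₃
        · by_contra huq
          have huq₀ : u • q ∈ L₀ := by
            by_contra h
            exact huq (MulAction.injective u (hfix₀ _ h))
          have huq₃ : u • q ∈ L₃ := by
            by_contra h
            exact huq (MulAction.injective u (hfix₃ _ h))
          exact hL₃₀ (hlineU L₀ L₃ hL₀ hL₃ q (u • q) (Ne.symm huq) hqL₀ huq₀ hqL₃ huq₃)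
        · exact hfix₃ q hqL₃
      · exact hfix₀ q hqL₀

end BurnsideAux

/-- Burnside: a finite group acting (faithfully) 2-transitively on a finite set Ω
(|Ω| ≥ 2) has a unique minimal normal subgroup, which is either elementary abelian or
nonabelian simple. -/
theorem stmt_14 {G Ω : Type*} [Group G] [Finite G] [Finite Ω] [Nontrivial Ω]
    [MulAction G Ω] [FaithfulSMul G Ω]
    (h2trans : ∀ a b c d : Ω, a ≠ b → c ≠ d → ∃ g : G, g • a = c ∧ g • b = d) :
    ∃ M : Subgroup G, M.Normal ∧ M ≠ ⊥ ∧
      (∀ M' : Subgroup G, M'.Normal → M' ≠ ⊥ → M ≤ M') ∧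
      ((∃ p : ℕ, p.Prime ∧ (∀ x y : M, x * y = y * x) ∧ ∀ x : M, x ^ p = 1) ∨
        (IsSimpleGroup M ∧ ¬ ∀ x y : M, x * y = y * x)) := by
  classical
  open BurnsideAux in
  obtain ⟨M, ⟨hMnorm, hMne⟩, hmincard⟩ :=
    exists_min_card (P := fun H : Subgroup G => H.Normal ∧ H ≠ ⊥)
      ⟨⊤, inferInstance, top_ne_bot' h2trans⟩
  have hle : ∀ M' : Subgroup G, M'.Normal → M' ≠ ⊥ → M ≤ M' := by
    intro M' hM'n hM'b
    have hint : M ⊓ M' ≠ ⊥ := inter_ne_bot h2trans hMnorm hM'n hMne hM'b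
    have hnormint : (M ⊓ M').Normal :=
      ⟨fun x hx g => ⟨hMnorm.conj_mem x hx.1 g, hM'n.conj_mem x hx.2 g⟩⟩
    have hcard := hmincard _ ⟨hnormint, hint⟩
    have heq : M ⊓ M' = M := Subgroup.eq_of_le_of_card_ge inf_le_left hcard
    rw [← heq]
    exact inf_le_right
  refine ⟨M, hMnorm, hMne, hle, ?_⟩
  by_cases hab : ∀ x y : ↥M, x * y = y * x
  · left
    have habG : ∀ m ∈ M, ∀ n ∈ M, m * n = n * m := by
      intro m hm n hn
      exact congrArg Subtype.val (hab ⟨m, hm⟩ ⟨n, hn⟩)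
    have trM : Tr Ω M := normal_transitive h2trans hMnorm hMne
    have srM : Srg Ω M := fun m hm x hx =>
      centralizer_semireg trM (fun n hn => habG m hm n hn) hx
    obtain ⟨p, hp, hexp⟩ := semireg_normal_exponent h2trans hMnorm hMne srM
    refine ⟨p, hp, hab, fun x => ?_⟩
    apply Subtype.ext
    push_cast
    exact hexp x x.2
  · right
    exact ⟨simple_of_nonabelian h2trans hMnorm hMne hle hab, hab⟩
end
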